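/- Suppose there exist real constants α, β, γ and a bounded measurable function ψ : S_X → ℝ such that for every x ∈ S_X and every y_0, y ∈ S_Y: (α f_X(x) + β f_Y(x) + γ) + λ (α g_X(y) + β g_Y(y) + γ) + ((1−λ²)/λ) (α g_X(y_0) + β g_Y(y_0) + γ) = ψ(x) − λ² ∫_{S_X} ψ(s) dσ_X[x,y](s) − (1−λ²) ∫_{S_X} ψ(s) dσ_X^0[y_0](s). Then for every probability measure σ_Y^0 on S_Y and every play distribution (ν_t)_{t≥0} consistent with (σ_X^0[·], σ_X) and σ_Y^0, the average payoffs π_X := (1−λ)[∫_{S_Y} g_X(y_0) dσ_Y^0(y_0) + ∑_{t=0}^∞ λ^{2t+1} ∫_{S_X×S_Y} (f_X(x) + λ g_X(y)) dν_t(x,y)] and π_Y := (1−λ)[∫_{S_Y} g_Y(y_0) dσ_Y^0(y_0) + ∑_{t=0}^∞ λ^{2t+1} ∫_{S_X×S_Y} (f_Y(x) + λ g_Y(y)) dν_t(x,y)] satisfy α π_X + β π_Y + γ = 0. In other words, if player X moves second, the memory-one strategy (σ_X^0[·], σ_X) unilaterally enforces α π_X + β π_Y + γ = 0 for every strategy of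 player Y. -/

import Mathlib

/-!
Integrate the identity defining `ψ` over one round of play, `(x, y) ∼ ν t` and `y₀ ∼ σY0`.
Since the `X`-marginal of `ν (t + 1)` is `σX` composed with `ν t`, and that of `ν 0` is `σX0`
composed with `σY0`, the right-hand side becomes `a t - λ² a (t + 1) - (1 - λ²) a 0` with
`a t = ∫ ψ(x) dν t`. Weighting round `t` by `λ ^ (2t + 1)` and summing, the `a`-terms telescope
to `λ a 0`, which cancels the contribution of the opening move; what remains is the relation
`α π_X + β π_Y + γ = 0`.
-/

open MeasureTheory ProbabilityTheory

lemma abs_add_mul_le {x y l C : ℝ} (hl : 0 ≤ l) (hx : |x| ≤ C) (hy : |y| ≤ C) :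
    |x + l * y| ≤ C + l * C := by
  grw [abs_add_le, abs_mul, abs_of_nonneg hl, hx, hy]

section Bounded

variable {α : Type*} [MeasurableSpace α] {μ : Measure α} {f : α → ℝ} {C : ℝ}

lemma integrable_of_abs_le [IsFiniteMeasure μ] (hf : Measurable f) (hC : ∀ x, |f x| ≤ C) :
    Integrable f μ :=
  .of_bound hf.aestronglyMeasurable C (ae_of_all _ hC)

lemma abs_integral_le_of_abs_le [IsProbabilityMeasure μ] (hC : ∀ x, |f x| ≤ C) :
    |∫ x, f x ∂μ| ≤ C := by
  simpa using norm_integral_le_of_norm_le_const (μ := μ) (f := f) (ae_of_all _ hC)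

lemma integral_mul_add_mul_add_const [IsProbabilityMeasure μ] {g : α → ℝ}
    (hf : Integrable f μ) (hg : Integrable g μ) (a b c : ℝ) :
    ∫ x, (a * f x + b * g x + c) ∂μ = a * ∫ x, f x ∂μ + b * ∫ x, g x ∂μ + c := by
  rw [integral_add (f := fun x ↦ a * f x + b * g x) ((hf.const_mul a).add (hg.const_mul b))
    (integrable_const c), integral_add (hf.const_mul a) (hg.const_mul b), integral_const_mul,
    integral_const_mul]
  simp

end Bounded

section Marginal

variable {α β γ : Type*} [MeasurableSpace α] [MeasurableSpace β] [MeasurableSpace γ]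
  {μ : Measure α} {κ : Kernel α β}

lemma MeasureTheory.Measure.fst_eq_comp_of_apply_prod_univ {ρ : Measure (β × γ)}
    (h : ∀ E, MeasurableSet E → ρ (E ×ˢ Set.univ) = ∫⁻ a, κ a E ∂μ) : ρ.fst = κ ∘ₘ μ := by
  ext E hE
  rw [Measure.fst_apply hE, ← Set.prod_univ, h E hE, Measure.bind_apply hE κ.aemeasurable]

lemma MeasureTheory.Measure.integral_comp_kernel [SFinite μ] [IsSFiniteKernel κ] {f : β → ℝ}
    (hf : Integrable f (κ ∘ₘ μ)) : ∫ b, f b ∂(κ ∘ₘ μ) = ∫ a, ∫ b, f b ∂κ a ∂μ := by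
  rw [Measure.comp_eq_comp_const_apply] at hf ⊢
  rw [Kernel.integral_comp hf]
  simp

lemma integral_fst_eq_integral_integral [IsFiniteMeasure μ] [IsMarkovKernel κ] {ρ : Measure (β × γ)}
    (h : ρ.fst = κ ∘ₘ μ) {f : β → ℝ} (hf : Measurable f) {C : ℝ} (hC : ∀ x, |f x| ≤ C) :
    ∫ p, f p.1 ∂ρ = ∫ a, ∫ b, f b ∂κ a ∂μ := by
  rw [← integral_map measurable_fst.aemeasurable hf.aestronglyMeasurable, ← Measure.fst, h,
    Measure.integral_comp_kernel (integrable_of_abs_le hf hC)]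

end Marginal

section Series

variable {r : ℝ} {C : ℝ}

lemma summable_pow_mul_of_abs_le (hr0 : 0 ≤ r) (hr1 : r < 1) {b : ℕ → ℝ} (hb : ∀ t, |b t| ≤ C) :
    Summable fun t ↦ r ^ t * b t :=
  .of_norm_bounded ((summable_geometric_of_lt_one hr0 hr1).mul_right C) fun t ↦ by
    rw [norm_mul, norm_pow, Real.norm_of_nonneg hr0]
    exact mul_le_mul_of_nonneg_left (hb t) (pow_nonneg hr0 t)

lemma hasSum_pow_mul_sub_mul_succ (hr0 : 0 ≤ r) (hr1 : r < 1) {b : ℕ → ℝ} (hb : ∀ t, |b t| ≤ C) :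
    HasSum (fun t ↦ r ^ t * (b t - r * b (t + 1))) (b 0) := by
  have hs := (summable_pow_mul_of_abs_le hr0 hr1 hb).hasSum
  have h := hs.sub ((hasSum_nat_add_iff' 1).mpr hs)
  rw [Finset.sum_range_one, pow_zero, one_mul, sub_sub_cancel] at h
  simpa only [pow_succ, mul_sub, mul_assoc] using h

lemma tsum_pow_mul_mul_one_sub_eq (hr0 : 0 ≤ r) (hr1 : r < 1) {a w : ℕ → ℝ}
    (ha : ∀ t, |a t| ≤ C) (c : ℝ) (hw : ∀ t, w t + c = a t - r * a (t + 1)) :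
    (∑' t, r ^ t * w t) * (1 - r) = a 0 * (1 - r) - c := by
  have hw' : (fun t ↦ r ^ t * w t) = fun t ↦ r ^ t * (a t - r * a (t + 1)) - c * r ^ t :=
    funext fun t ↦ by linear_combination r ^ t * hw t
  have h : HasSum (fun t ↦ r ^ t * w t) (a 0 - c * (1 - r)⁻¹) := hw' ▸
    (hasSum_pow_mul_sub_mul_succ hr0 hr1 ha).sub ((hasSum_geometric_of_lt_one hr0 hr1).mul_left c)
  rw [h.tsum_eq, sub_mul, inv_mul_cancel_right₀ (by linarith)]

end Series

section KernelIntegral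

variable {α β γ : Type*} [MeasurableSpace α] [MeasurableSpace β] [MeasurableSpace γ]

lemma integrable_integral_kernel_of_abs_le {μ : Measure α} [IsFiniteMeasure μ] {κ : Kernel α β}
    [IsMarkovKernel κ] {f : β → ℝ} (hf : Measurable f) {C : ℝ} (hC : ∀ x, |f x| ≤ C) :
    Integrable (fun a ↦ ∫ b, f b ∂κ a) μ :=
  integrable_of_abs_le hf.stronglyMeasurable.integral_kernel.measurable fun _ ↦
    abs_integral_le_of_abs_le hC

lemma integral_add_integral_eq_of_forall_eq {μ : Measure β} [IsProbabilityMeasure μ]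
    {ρ : Measure (α × β)} [IsProbabilityMeasure ρ] {ρ' ρ₀ : Measure (α × γ)}
    {κ : Kernel (α × β) α} [IsMarkovKernel κ] {κ₀ : Kernel β α} [IsMarkovKernel κ₀]
    (h' : ρ'.fst = κ ∘ₘ ρ) (h₀ : ρ₀.fst = κ₀ ∘ₘ μ)
    {F : α × β → ℝ} {G : β → ℝ} (hF : Integrable F ρ) (hG : Integrable G μ)
    {ψ : α → ℝ} (hψ : Measurable ψ) {C : ℝ} (hψC : ∀ x, |ψ x| ≤ C) (r s : ℝ)
    (hid : ∀ q y₀, F q + G y₀ = ψ q.1 - r * ∫ x, ψ x ∂κ q - s * ∫ x, ψ x ∂κ₀ y₀) :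
    ∫ q, F q ∂ρ + ∫ y, G y ∂μ = ∫ q, ψ q.1 ∂ρ - r * ∫ q, ψ q.1 ∂ρ' - s * ∫ q, ψ q.1 ∂ρ₀ := by
  have hT := integrable_integral_kernel_of_abs_le (μ := ρ) (κ := κ) hψ hψC
  have hS := integrable_integral_kernel_of_abs_le (μ := μ) (κ := κ₀) hψ hψC
  have hψ₁ : Integrable (fun q ↦ ψ q.1) ρ :=
    integrable_of_abs_le (hψ.comp measurable_fst) fun q ↦ hψC q.1
  set A := ∫ q, ψ q.1 ∂ρ - r * ∫ q, ∫ x, ψ x ∂κ q ∂ρ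
  have hinner (y₀ : β) : ∫ q, F q ∂ρ + G y₀ = A - s * ∫ x, ψ x ∂κ₀ y₀ := calc
    ∫ q, F q ∂ρ + G y₀ = ∫ q, (F q + G y₀) ∂ρ := by
      rw [integral_add hF (integrable_const _), integral_const]; simp
    _ = ∫ q, (ψ q.1 - r * ∫ x, ψ x ∂κ q - s * ∫ x, ψ x ∂κ₀ y₀) ∂ρ :=
      integral_congr_ae (ae_of_all _ fun q ↦ hid q y₀)
    _ = A - s * ∫ x, ψ x ∂κ₀ y₀ := by
      rw [integral_sub (f := fun q ↦ ψ q.1 - r * ∫ x, ψ x ∂κ q) (hψ₁.sub (hT.const_mul r))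
          (integrable_const _),
        integral_sub hψ₁ (hT.const_mul r), integral_const_mul, integral_const]
      simp [A]
  calc ∫ q, F q ∂ρ + ∫ y, G y ∂μ = ∫ y, (∫ q, F q ∂ρ + G y) ∂μ := by
        rw [integral_add (integrable_const _) hG, integral_const]; simp
    _ = ∫ y, (A - s * ∫ x, ψ x ∂κ₀ y) ∂μ := integral_congr_ae (ae_of_all _ hinner)
    _ = A - s * ∫ y, ∫ x, ψ x ∂κ₀ y ∂μ := by
        rw [integral_sub (integrable_const _) (hS.const_mul s), integral_const,
          integral_const_mul]; simp
    _ = _ := by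
        rw [integral_fst_eq_integral_integral h' hψ hψC,
          integral_fst_eq_integral_integral h₀ hψ hψC]

end KernelIntegral

section RoundPayoff

variable {SX SY : Type*} [MeasurableSpace SX] [MeasurableSpace SY] {lam Cf : ℝ}

lemma integral_round_payoff_eq {fX fY : SX → ℝ} {gX gY : SY → ℝ} (hlam : 0 < lam)
    (hfXm : Measurable fX) (hfYm : Measurable fY) (hgXm : Measurable gX) (hgYm : Measurable gY)
    (hfXb : ∀ x, |fX x| ≤ Cf) (hfYb : ∀ x, |fY x| ≤ Cf)
    (hgXb : ∀ y, |gX y| ≤ Cf) (hgYb : ∀ y, |gY y| ≤ Cf)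
    {σX0 : Kernel SY SX} [IsMarkovKernel σX0] {σX : Kernel (SX × SY) SX} [IsMarkovKernel σX]
    {α β γ : ℝ} {ψ : SX → ℝ} (hψm : Measurable ψ) {C : ℝ} (hψb : ∀ s, |ψ s| ≤ C)
    (hid : ∀ (x : SX) (y0 y : SY),
      (α * fX x + β * fY x + γ) + lam * (α * gX y + β * gY y + γ)
        + ((1 - lam ^ 2) / lam) * (α * gX y0 + β * gY y0 + γ) =
        ψ x - lam ^ 2 * (∫ s, ψ s ∂(σX (x, y))) - (1 - lam ^ 2) * (∫ s, ψ s ∂(σX0 y0)))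
    {σY0 : Measure SY} [IsProbabilityMeasure σY0]
    {ρ ρ' ρ₀ : Measure (SX × SY)} [IsProbabilityMeasure ρ]
    (h' : ρ'.fst = σX ∘ₘ ρ) (h₀ : ρ₀.fst = σX0 ∘ₘ σY0) :
    α * ∫ q, (fX q.1 + lam * gX q.2) ∂ρ + β * ∫ q, (fY q.1 + lam * gY q.2) ∂ρ + γ * (1 + lam)
      + (1 - lam ^ 2) / lam * (α * ∫ y, gX y ∂σY0 + β * ∫ y, gY y ∂σY0 + γ) =
      ∫ q, ψ q.1 ∂ρ - lam ^ 2 * ∫ q, ψ q.1 ∂ρ' - (1 - lam ^ 2) * ∫ q, ψ q.1 ∂ρ₀ := by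
  have hX : Integrable (fun q ↦ fX q.1 + lam * gX q.2) ρ :=
    integrable_of_abs_le (by fun_prop) fun q ↦ abs_add_mul_le hlam.le (hfXb q.1) (hgXb q.2)
  have hY : Integrable (fun q ↦ fY q.1 + lam * gY q.2) ρ :=
    integrable_of_abs_le (by fun_prop) fun q ↦ abs_add_mul_le hlam.le (hfYb q.1) (hgYb q.2)
  have hgX : Integrable gX σY0 := integrable_of_abs_le hgXm hgXb
  have hgY : Integrable gY σY0 := integrable_of_abs_le hgYm hgYb
  rw [← integral_mul_add_mul_add_const hX hY, ← integral_mul_add_mul_add_const hgX hgY,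
    ← integral_const_mul]
  refine integral_add_integral_eq_of_forall_eq h' h₀
    (((hX.const_mul α).add (hY.const_mul β)).add (integrable_const _))
    ((((hgX.const_mul α).add (hgY.const_mul β)).add (integrable_const γ)).const_mul _)
    hψm hψb _ _ fun q y₀ ↦ ?_
  simp only [Pi.add_apply]
  rw [← hid q.1 y₀ q.2]
  ring

end RoundPayoff

/-- Autocratic strategies for strictly-alternating games in which `Y` moves
first: if the functional identity holds for some bounded measurable `ψ`, then
the memory-one strategy `(σX0[·], σX)` unilaterally enforces
`α π_X + β π_Y + γ = 0` for every initial action `σY0` of player `Y` and every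
consistent play distribution. -/
theorem stmt_5
    {SX SY : Type*} [MeasurableSpace SX] [MeasurableSpace SY]
    (lam : ℝ) (hlam0 : 0 < lam) (hlam1 : lam < 1)
    (fX fY : SX → ℝ) (gX gY : SY → ℝ)
    (hfXm : Measurable fX) (hfYm : Measurable fY)
    (hgXm : Measurable gX) (hgYm : Measurable gY)
    (Cf : ℝ) (hfXb : ∀ x, |fX x| ≤ Cf) (hfYb : ∀ x, |fY x| ≤ Cf)
    (hgXb : ∀ y, |gX y| ≤ Cf) (hgYb : ∀ y, |gY y| ≤ Cf)
    (σX0 : ProbabilityTheory.Kernel SY SX) [ProbabilityTheory.IsMarkovKernel σX0]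
    (σX : ProbabilityTheory.Kernel (SX × SY) SX) [ProbabilityTheory.IsMarkovKernel σX]
    (α β γ : ℝ)
    (ψ : SX → ℝ) (hψm : Measurable ψ) (C : ℝ) (hψb : ∀ s, |ψ s| ≤ C)
    (hid : ∀ (x : SX) (y0 y : SY),
      (α * fX x + β * fY x + γ) + lam * (α * gX y + β * gY y + γ)
        + ((1 - lam ^ 2) / lam) * (α * gX y0 + β * gY y0 + γ) =
        ψ x - lam ^ 2 * (∫ s, ψ s ∂(σX (x, y)))
          - (1 - lam ^ 2) * (∫ s, ψ s ∂(σX0 y0)))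
    (σY0 : Measure SY) [IsProbabilityMeasure σY0]
    (ν : ℕ → Measure (SX × SY)) (hν : ∀ t, IsProbabilityMeasure (ν t))
    (hν0 : ∀ E : Set SX, MeasurableSet E →
      ν 0 (E ×ˢ (Set.univ : Set SY)) = ∫⁻ y0, σX0 y0 E ∂σY0)
    (hνsucc : ∀ (t : ℕ) (E : Set SX), MeasurableSet E →
      ν (t + 1) (E ×ˢ (Set.univ : Set SY)) = ∫⁻ q, σX q E ∂(ν t)) :
    α * ((1 - lam) * ((∫ y0, gX y0 ∂σY0) + ∑' t : ℕ, lam ^ (2 * t + 1) *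
          ∫ q, (fX q.1 + lam * gX q.2) ∂(ν t)))
      + β * ((1 - lam) * ((∫ y0, gY y0 ∂σY0) + ∑' t : ℕ, lam ^ (2 * t + 1) *
          ∫ q, (fY q.1 + lam * gY q.2) ∂(ν t)))
      + γ = 0 := by
  have hround (t : ℕ) := integral_round_payoff_eq hlam0 hfXm hfYm hgXm hgYm hfXb hfYb hgXb hgYb
    hψm hψb hid (Measure.fst_eq_comp_of_apply_prod_univ (hνsucc t))
    (Measure.fst_eq_comp_of_apply_prod_univ hν0)
  set uX : ℕ → ℝ := fun t ↦ ∫ q, (fX q.1 + lam * gX q.2) ∂ν t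
  set uY : ℕ → ℝ := fun t ↦ ∫ q, (fY q.1 + lam * gY q.2) ∂ν t
  set a : ℕ → ℝ := fun t ↦ ∫ q, ψ q.1 ∂ν t
  set k := α * ∫ y, gX y ∂σY0 + β * ∫ y, gY y ∂σY0 + γ
  have hr0 : 0 ≤ lam ^ 2 := sq_nonneg lam
  have hr1 : lam ^ 2 < 1 := by nlinarith
  have hsX := summable_pow_mul_of_abs_le hr0 hr1 (b := uX) fun t ↦
    abs_integral_le_of_abs_le fun q ↦ abs_add_mul_le hlam0.le (hfXb q.1) (hgXb q.2)
  have hsY := summable_pow_mul_of_abs_le hr0 hr1 (b := uY) fun t ↦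
    abs_integral_le_of_abs_le fun q ↦ abs_add_mul_le hlam0.le (hfYb q.1) (hgYb q.2)
  have hsum := tsum_pow_mul_mul_one_sub_eq hr0 hr1 (a := a) (w := fun t ↦ α * uX t + β * uY t)
    (fun t ↦ abs_integral_le_of_abs_le fun q ↦ hψb q.1)
    (γ * (1 + lam) + (1 - lam ^ 2) / lam * k + (1 - lam ^ 2) * a 0)
    fun t ↦ by linear_combination hround t
  simp only [mul_add, mul_left_comm _ α, mul_left_comm _ β] at hsum
  rw [(hsX.mul_left α).tsum_add (hsY.mul_left β), tsum_mul_left, tsum_mul_left] at hsum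
  have hpow (t : ℕ) : lam ^ (2 * t + 1) = lam * (lam ^ 2) ^ t := by ring
  simp_rw [hpow, mul_assoc, tsum_mul_left]
  have he : lam * ((1 - lam ^ 2) / lam) = 1 - lam ^ 2 := mul_div_cancel₀ _ hlam0.ne'
  -- `1 - λ² = (1 - λ) (1 + λ)`, so the goal times `1 + λ` is a combination of `hsum` and `he`
  refine mul_left_cancel₀ (by positivity : 1 + lam ≠ 0) ?_
  linear_combination lam * hsum - k * he
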